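/- arXiv:1506.00157 — 2 statements merged into one kernel-verified Lean document; each statement's English description precedes it below -/
import Mathlib

section
/- Let d ≥ 2. For any Lebesgue measurable set E ⊆ ℝ^d with 0 < |E| < ∞, the set E^{†★} satisfies |(E^{†★})^† Δ E^{†★}| = 0 and |(E^{†★})^{†★} Δ E^{†★}| = 0; that is, E^{†★} is invariant (up to Lebesgue null sets) under Schwarz symmetrization and under the composite symmetrization. -/
open MeasureTheory Metric Filter
open scoped ENNReal Pointwise Topology

noncomputable section

abbrev Euc (d : ℕ) : Type := EuclideanSpace ℝ (Fin d)

/-- The Riesz–Sobolev trilinear form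
`𝒯(E₁,E₂,E₃) = ∫∫ 1_{E₁}(x) 1_{E₂}(y) 1_{E₃}(-x-y) dx dy`. -/
noncomputable def Ttri {d : ℕ} (E₁ E₂ E₃ : Set (Euc d)) : ℝ :=
  ∫ x : Euc d, ∫ y : Euc d,
    E₁.indicator (fun _ => (1:ℝ)) x * E₂.indicator (fun _ => (1:ℝ)) y *
      E₃.indicator (fun _ => (1:ℝ)) (-x - y)

/-- `E^•` : the closed ball centered at `0` with the same volume as `E`. -/
noncomputable def ballSym {d : ℕ} (E : Set (Euc d)) : Set (Euc d) :=
  Metric.closedBall 0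
    (((volume E).toReal / (volume (Metric.closedBall (0 : Euc d) 1)).toReal) ^ (1 / (d:ℝ)))

/-- `τ`-admissibility of an ordered triple of positive reals. -/
def TauAdm (τ r₁ r₂ r₃ : ℝ) : Prop :=
  0 < r₁ ∧ 0 < r₂ ∧ 0 < r₃ ∧
  r₁ + r₂ ≥ r₃ + τ * max r₁ (max r₂ r₃) ∧
  r₂ + r₃ ≥ r₁ + τ * max r₁ (max r₂ r₃) ∧
  r₁ + r₃ ≥ r₂ + τ * max r₁ (max r₂ r₃)

/-- `τ`-admissibility of an ordered triple of sets. -/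
def TauAdmSets (d : ℕ) (τ : ℝ) (E₁ E₂ E₃ : Set (Euc d)) : Prop :=
  TauAdm τ ((volume E₁).toReal ^ (1/(d:ℝ))) ((volume E₂).toReal ^ (1/(d:ℝ)))
    ((volume E₃).toReal ^ (1/(d:ℝ)))

/-- Strict admissibility of a triple of positive reals. -/
def StrictAdm (r₁ r₂ r₃ : ℝ) : Prop :=
  0 < r₁ ∧ 0 < r₂ ∧ 0 < r₃ ∧ r₁ < r₂ + r₃ ∧ r₂ < r₁ + r₃ ∧ r₃ < r₁ + r₂

/-- An ellipsoid: image of the closed unit ball under an invertible affine map. -/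
def IsEllipsoid (d : ℕ) (S : Set (Euc d)) : Prop :=
  ∃ (A : Euc d ≃ₗ[ℝ] Euc d) (v : Euc d),
    S = (fun x => A x + v) '' Metric.closedBall 0 1

/-- An ellipsoid centered at `0`. -/
def IsCenteredEllipsoid (d : ℕ) (S : Set (Euc d)) : Prop :=
  ∃ A : Euc d ≃ₗ[ℝ] Euc d, S = (fun x => A x) '' Metric.closedBall 0 1

/-- Assemble a point of `ℝ^d` from its first `d-1` coordinates and its last one. -/
def join (d : ℕ) (x' : Euc (d-1)) (t : ℝ) : Euc d :=
  WithLp.toLp 2 (fun i : Fin d => if h : (i:ℕ) < d - 1 then x' ⟨i, h⟩ else t)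

/-- The first `d-1` coordinates. -/
def projHead (d : ℕ) (x : Euc d) : Euc (d-1) :=
  WithLp.toLp 2 (fun i : Fin (d-1) => x ⟨i, lt_of_lt_of_le i.2 (Nat.sub_le d 1)⟩)

/-- The last coordinate. -/
def lastC (d : ℕ) (x : Euc d) : ℝ :=
  if h : 0 < d then x ⟨d-1, Nat.sub_lt h one_pos⟩ else 0

/-- Vertical slice `E^{x'} = {t : (x',t) ∈ E}`. -/
def sliceV (d : ℕ) (E : Set (Euc d)) (x' : Euc (d-1)) : Set ℝ :=
  {t : ℝ | join d x' t ∈ E}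

/-- Horizontal slice `E_t = {y' : (y',t) ∈ E}`. -/
def sliceH (d : ℕ) (E : Set (Euc d)) (t : ℝ) : Set (Euc (d-1)) :=
  {y' | join d y' t ∈ E}

/-- Steiner symmetrization in the last coordinate. -/
noncomputable def steiner (d : ℕ) (E : Set (Euc d)) : Set (Euc d) :=
  {x | ∃ x' t, x = join d x' t ∧ 0 < volume (sliceV d E x') ∧
      ENNReal.ofReal (2 * |t|) ≤ volume (sliceV d E x')}

/-- Schwarz symmetrization in the first `d-1` coordinates. -/
noncomputable def schwarz (d : ℕ) (E : Set (Euc d)) : Set (Euc d) :=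
  {x | ∃ x' t, x = join d x' t ∧ 0 < volume (sliceH d E t) ∧
      ENNReal.ofReal
        ((volume (Metric.closedBall (0 : Euc (d-1)) 1)).toReal * ‖x'‖ ^ (d-1))
        ≤ volume (sliceH d E t)}

/-- `E^{†★} = (E^†)^★`. -/
noncomputable def dagStar (d : ℕ) (E : Set (Euc d)) : Set (Euc d) :=
  steiner d (schwarz d E)

/-- `E'_k = {x' : 2^k ≤ |E^{x'}| < 2^{k+1}}`. -/
noncomputable def layerBase (d : ℕ) (E : Set (Euc d)) (k : ℤ) : Set (Euc (d-1)) :=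
  {x' | ENNReal.ofReal ((2:ℝ) ^ k) ≤ volume (sliceV d E x') ∧
        volume (sliceV d E x') < ENNReal.ofReal ((2:ℝ) ^ (k+1))}

/-- `E_k = {x ∈ E : x' ∈ E'_k}`. -/
noncomputable def layer (d : ℕ) (E : Set (Euc d)) (k : ℤ) : Set (Euc d) :=
  {x ∈ E | projHead d x ∈ layerBase d E k}

/-- A special dilation `(x₁,…,x_d) ↦ (r x₁,…, r x_{d-1}, ρ x_d)`. -/
def spDil (d : ℕ) (r ρ : ℝ) (x : Euc d) : Euc d :=
  WithLp.toLp 2 (fun i : Fin d => if (i:ℕ) < d - 1 then r * x i else ρ * x i)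

/-- A vertical skew-shift `(x', x_d) ↦ (x', x_d + ℓ(x'))`. -/
noncomputable def skewShift (d : ℕ) (ℓ : Euc (d-1) →ᵃ[ℝ] ℝ) (x : Euc d) : Euc d :=
  join d (projHead d x) (lastC d x + ℓ (projHead d x))

/-- Assemble a point of `ℝ^d = ℝ^{d-k} × ℝ^k`. -/
def joinP (d k : ℕ) (y : Euc (d-k)) (z : Euc k) : Euc d :=
  WithLp.toLp 2 (fun i : Fin d => if h : (i:ℕ) < d - k then y ⟨i, h⟩
    else if h2 : (i:ℕ) - (d-k) < k then z ⟨(i:ℕ) - (d-k), h2⟩ else 0)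

/-- Slice `E^{y} = {z ∈ ℝ^k : (y,z) ∈ E}`. -/
def sliceK (d k : ℕ) (E : Set (Euc d)) (y : Euc (d-k)) : Set (Euc k) :=
  {z | joinP d k y z ∈ E}

/-- Projection `π(E) = {y : E^y ≠ ∅}`. -/
def projK (d k : ℕ) (E : Set (Euc d)) : Set (Euc (d-k)) :=
  {y | (sliceK d k E y).Nonempty}

/-- The closed ball centered at `0` of prescribed volume `γ` (a point if `γ = 0`). -/
noncomputable def ballOfVol (d : ℕ) (γ : ℝ) : Set (Euc d) :=
  Metric.closedBall 0
    ((γ / (volume (Metric.closedBall (0 : Euc d) 1)).toReal) ^ (1/(d:ℝ)))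

/-- `Λ_d(γ₁,γ₂,γ₃) = 𝒯(B₁,B₂,B₃)` for balls of volumes `γ_j` centered at `0`. -/
noncomputable def Lam (d : ℕ) (γ₁ γ₂ γ₃ : ℝ) : ℝ :=
  Ttri (ballOfVol d γ₁) (ballOfVol d γ₂) (ballOfVol d γ₃)

/-- `rℰ + v`. -/
def scaleShift (d : ℕ) (r : ℝ) (v : Euc d) (S : Set (Euc d)) : Set (Euc d) :=
  (fun x => r • x + v) '' S

end

/-! Every horizontal slice of `E^{†★}` is a union of centred balls, because the vertical slices
of `E^†` shrink as `|x'|` grows and Steiner symmetrization keeps only their lengths. A union of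
centred balls differs from the closed centred ball of the same measure by at most a sphere, so
`†` changes `E^{†★}` only on a null set. Steiner symmetrization sees only the lengths of vertical
slices, which are therefore unchanged almost everywhere; hence `†★` does not change `E^{†★}` up to
a null set either, as `★` is idempotent. -/

open Set

namespace Symmetrization

variable {n : ℕ} {S T : Set (Euc (n + 1))}

/-- The closed centred ball of measure `m`; empty for `m = 0` and everything for `m = ∞`. -/
def symmBall (n : ℕ) (m : ℝ≥0∞) : Set (Euc n) :=
  {x' | 0 < m ∧ ENNReal.ofReal ((volume (closedBall (0 : Euc n) 1)).toReal * ‖x'‖ ^ n) ≤ m}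

/-- The closed centred interval of length `m`; empty for `m = 0` and everything for `m = ∞`. -/
def symmInterval (m : ℝ≥0∞) : Set ℝ :=
  {t | 0 < m ∧ ENNReal.ofReal (2 * |t|) ≤ m}

@[simp]
theorem projHead_join (x' : Euc n) (t : ℝ) : projHead (n + 1) (join (n + 1) x' t) = x' := by
  ext i
  simp only [projHead, _root_.join, WithLp.ofLp_toLp, dif_pos i.2]

@[simp]
theorem lastC_join (x' : Euc n) (t : ℝ) : lastC (n + 1) (join (n + 1) x' t) = t := by
  simp only [lastC, _root_.join, Nat.add_sub_cancel, dif_pos n.succ_pos, lt_irrefl, dite_false]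

theorem lastC_succ (x : Euc (n + 1)) : lastC (n + 1) x = x (Fin.last n) := by
  simp only [lastC, dif_pos n.succ_pos]
  rfl

theorem join_projHead_lastC (x : Euc (n + 1)) :
    join (n + 1) (projHead (n + 1) x) (lastC (n + 1) x) = x := by
  ext i
  simp only [_root_.join, projHead, lastC_succ, Nat.add_sub_cancel, WithLp.ofLp_toLp]
  split_ifs with h
  · rfl
  · exact congrArg x.ofLp (Fin.ext (by simp only [Fin.val_last]; omega))

@[fun_prop]
theorem measurable_projHead : Measurable (projHead (n + 1)) := by
  unfold projHead
  fun_prop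

@[fun_prop]
theorem measurable_lastC : Measurable (lastC (n + 1)) := by
  simp only [funext lastC_succ]
  fun_prop

theorem measurePreserving_join (n : ℕ) :
    MeasurePreserving (fun p : Euc n × ℝ => join (n + 1) p.1 p.2)
      (volume : Measure (Euc n × ℝ)) (volume : Measure (Euc (n + 1))) := by
  have h_toLp := EuclideanSpace.volume_preserving_symm_measurableEquiv_toLp
  have h_insert :=
    (volume_preserving_piFinSuccAbove (fun _ : Fin (n + 1) => ℝ) (Fin.last n)).symm
  have h_split : MeasurePreserving
      (fun p : Euc n × ℝ => (p.2, (MeasurableEquiv.toLp 2 (Fin n → ℝ)).symm p.1))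
      (volume : Measure (Euc n × ℝ)) volume :=
    Measure.measurePreserving_swap.comp ((h_toLp (Fin n)).prod (MeasurePreserving.id volume))
  convert (((h_toLp (Fin (n + 1))).symm _).comp h_insert).comp h_split using 1
  · rfl
  funext p
  ext i
  change _ = (MeasurableEquiv.piFinSuccAbove (fun _ : Fin (n + 1) => ℝ) (Fin.last n)).symm _ i
  rw [MeasurableEquiv.piFinSuccAbove_symm_apply, Fin.insertNthEquiv_apply]
  induction i using Fin.lastCases with
  | last => simp [_root_.join]
  | cast j => simp [_root_.join]

theorem sliceH_symmDiff (t : ℝ) :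
    sliceH (n + 1) (symmDiff S T) t = symmDiff (sliceH (n + 1) S t) (sliceH (n + 1) T t) := rfl

theorem sliceV_symmDiff (x' : Euc n) :
    sliceV (n + 1) (symmDiff S T) x' = symmDiff (sliceV (n + 1) S x') (sliceV (n + 1) T x') := rfl

theorem measurableSet_preimage_join (hS : MeasurableSet S) :
    MeasurableSet ((fun p : Euc n × ℝ => join (n + 1) p.1 p.2) ⁻¹' S) :=
  (measurePreserving_join n).measurable hS

theorem measurable_volume_sliceH (hS : MeasurableSet S) :
    Measurable fun t => volume (sliceH (n + 1) S t) :=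
  measurable_measure_prodMk_right (measurableSet_preimage_join hS)

theorem measurable_volume_sliceV (hS : MeasurableSet S) :
    Measurable fun x' => volume (sliceV (n + 1) S x') :=
  measurable_measure_prodMk_left (measurableSet_preimage_join hS)

theorem volume_eq_lintegral_sliceH (hS : MeasurableSet S) :
    volume S = ∫⁻ t, volume (sliceH (n + 1) S t) := by
  rw [← (measurePreserving_join n).measure_preimage hS.nullMeasurableSet, Measure.volume_eq_prod,
    Measure.prod_apply_symm (measurableSet_preimage_join hS)]
  rfl

theorem volume_eq_zero_iff_ae_sliceV (hS : MeasurableSet S) :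
    volume S = 0 ↔ ∀ᵐ x', volume (sliceV (n + 1) S x') = 0 := by
  rw [← (measurePreserving_join n).measure_preimage hS.nullMeasurableSet, Measure.volume_eq_prod,
    Measure.measure_prod_null (measurableSet_preimage_join hS)]
  rfl

theorem ae_eq_of_forall_sliceH_ae_eq (hS : MeasurableSet S) (hT : MeasurableSet T)
    (h : ∀ t, sliceH (n + 1) S t =ᵐ[volume] sliceH (n + 1) T t) : S =ᵐ[volume] T := by
  simp only [← measure_symmDiff_eq_zero_iff] at h ⊢
  rw [volume_eq_lintegral_sliceH (hS.symmDiff hT)]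
  simp only [sliceH_symmDiff, h, lintegral_zero]

theorem ae_eq_iff_ae_sliceV_ae_eq (hS : MeasurableSet S) (hT : MeasurableSet T) :
    S =ᵐ[volume] T ↔ ∀ᵐ x', sliceV (n + 1) S x' =ᵐ[volume] sliceV (n + 1) T x' := by
  simp only [← measure_symmDiff_eq_zero_iff, ← sliceV_symmDiff]
  exact volume_eq_zero_iff_ae_sliceV (hS.symmDiff hT)

theorem mem_steiner_iff {x : Euc (n + 1)} :
    x ∈ steiner (n + 1) S ↔
      lastC (n + 1) x ∈ symmInterval (volume (sliceV (n + 1) S (projHead (n + 1) x))) := by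
  constructor
  · rintro ⟨x', t, rfl, h⟩
    simpa [symmInterval] using h
  · exact fun h => ⟨_, _, (join_projHead_lastC x).symm, h⟩

theorem mem_schwarz_iff {x : Euc (n + 1)} :
    x ∈ schwarz (n + 1) S ↔
      projHead (n + 1) x ∈ symmBall n (volume (sliceH (n + 1) S (lastC (n + 1) x))) := by
  constructor
  · rintro ⟨x', t, rfl, h⟩
    simpa [symmBall] using h
  · exact fun h => ⟨_, _, (join_projHead_lastC x).symm, h⟩

theorem sliceV_steiner (x' : Euc n) :
    sliceV (n + 1) (steiner (n + 1) S) x' = symmInterval (volume (sliceV (n + 1) S x')) := by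
  ext t
  simp [sliceV, mem_steiner_iff]

theorem sliceH_steiner (t : ℝ) :
    sliceH (n + 1) (steiner (n + 1) S) t =
      {x' | t ∈ symmInterval (volume (sliceV (n + 1) S x'))} := by
  ext x'
  simp [sliceH, mem_steiner_iff]

theorem sliceH_schwarz (t : ℝ) :
    sliceH (n + 1) (schwarz (n + 1) S) t = symmBall n (volume (sliceH (n + 1) S t)) := by
  ext x'
  simp [sliceH, mem_schwarz_iff]

theorem sliceV_schwarz (x' : Euc n) :
    sliceV (n + 1) (schwarz (n + 1) S) x' =
      {t | x' ∈ symmBall n (volume (sliceH (n + 1) S t))} := by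
  ext t
  simp [sliceV, mem_schwarz_iff]

theorem measurableSet_steiner (hS : MeasurableSet S) : MeasurableSet (steiner (n + 1) S) := by
  have hm := (measurable_volume_sliceV hS).comp measurable_projHead
  simp only [Set.ext fun x => @mem_steiner_iff n S x, symmInterval, ofPred_and]
  exact (measurableSet_lt measurable_const hm).inter
    (measurableSet_le (by fun_prop) hm)

theorem measurableSet_schwarz (hS : MeasurableSet S) : MeasurableSet (schwarz (n + 1) S) := by
  have hm := (measurable_volume_sliceH hS).comp (measurable_lastC (n := n))
  simp only [Set.ext fun x => @mem_schwarz_iff n S x, symmBall, ofPred_and]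
  exact (measurableSet_lt measurable_const hm).inter
    (measurableSet_le (by fun_prop) hm)

theorem measurableSet_dagStar (hS : MeasurableSet S) : MeasurableSet (dagStar (n + 1) S) :=
  measurableSet_steiner (measurableSet_schwarz hS)

theorem symmInterval_mono {m m' : ℝ≥0∞} (h : m ≤ m') : symmInterval m ⊆ symmInterval m' :=
  fun _ ht => ⟨ht.1.trans_le h, ht.2.trans h⟩

theorem volume_symmInterval (m : ℝ≥0∞) : volume (symmInterval m) = m := by
  rcases eq_or_ne m 0 with rfl | h0
  · simp [symmInterval]
  rcases eq_or_ne m ⊤ with rfl | htop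
  · simp [symmInterval]
  have h_Icc : symmInterval m = Icc (-(m.toReal / 2)) (m.toReal / 2) := by
    ext t
    simp only [symmInterval, mem_ofPred_eq, pos_iff_ne_zero.2 h0, true_and,
      ENNReal.ofReal_le_iff_le_toReal htop, mem_Icc]
    constructor
    · intro h
      constructor <;> linarith [neg_abs_le t, le_abs_self t]
    · intro h
      linarith [abs_le.2 h]
  rw [h_Icc, Real.volume_Icc, show m.toReal / 2 - -(m.toReal / 2) = m.toReal by ring,
    ENNReal.ofReal_toReal htop]

theorem steiner_steiner : steiner (n + 1) (steiner (n + 1) S) = steiner (n + 1) S := by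
  ext x
  rw [mem_steiner_iff, mem_steiner_iff, sliceV_steiner, volume_symmInterval]

theorem symmBall_zero : symmBall n 0 = ∅ := by
  simp [symmBall]

theorem symmBall_anti {m : ℝ≥0∞} {x y : Euc n} (hxy : ‖y‖ ≤ ‖x‖) (hx : x ∈ symmBall n m) :
    y ∈ symmBall n m :=
  ⟨hx.1, le_trans (ENNReal.ofReal_le_ofReal (by gcongr)) hx.2⟩

theorem volume_closedBall_zero {r : ℝ} (hr : 0 ≤ r) :
    volume (closedBall (0 : Euc n) r)
      = ENNReal.ofReal ((volume (closedBall (0 : Euc n) 1)).toReal * r ^ n) := by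
  rw [Measure.addHaar_closedBall' _ _ hr, finrank_euclideanSpace_fin,
    ENNReal.ofReal_mul ENNReal.toReal_nonneg, ENNReal.ofReal_toReal measure_closedBall_lt_top.ne,
    mul_comm]

theorem symmBall_volume_ae_eq [NeZero n] {A : Set (Euc n)}
    (hA : ∀ x y : Euc n, ‖y‖ ≤ ‖x‖ → x ∈ A → y ∈ A) : symmBall n (volume A) =ᵐ[volume] A := by
  rcases eq_or_ne (volume A) 0 with hA0 | hA0
  · rw [hA0, symmBall_zero]
    exact (ae_eq_empty.2 hA0).symm
  have h_sub : A ⊆ symmBall n (volume A) := fun x hx =>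
    ⟨pos_iff_ne_zero.2 hA0, by
      rw [← volume_closedBall_zero (norm_nonneg x)]
      exact measure_mono fun y hy => hA x y (mem_closedBall_zero_iff.1 hy) hx⟩
  -- A point of `symmBall n (volume A)` outside `A` bounds `A` from outside, so the ball through
  -- it has measure exactly `volume A`: all such points lie on one sphere.
  have h_edge : ∀ x ∈ symmBall n (volume A) \ A, volume (closedBall (0 : Euc n) ‖x‖) = volume A :=
    fun x hx => le_antisymm (by rw [volume_closedBall_zero (norm_nonneg x)]; exact hx.1.2) <| by
      rw [Measure.addHaar_closedBall_eq_addHaar_ball]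
      exact measure_mono fun y hy =>
        mem_ball_zero_iff.2 (lt_of_not_ge fun h => hx.2 (hA y x h hy))
  refine ae_eq_set.2 ⟨?_, by rw [sdiff_eq_empty.2 h_sub, measure_empty]⟩
  rcases (symmBall n (volume A) \ A).eq_empty_or_nonempty with h | ⟨x₀, hx₀⟩
  · rw [h, measure_empty]
  refine measure_mono_null (fun x hx => mem_sphere_zero_iff_norm.2 ?_)
    (Measure.addHaar_sphere volume 0 ‖x₀‖)
  have hω : (volume (closedBall (0 : Euc n) 1)).toReal ≠ 0 :=
    (ENNReal.toReal_pos (measure_closedBall_pos _ _ one_pos).ne'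
      measure_closedBall_lt_top.ne).ne'
  have h_eq := (h_edge x hx).trans (h_edge x₀ hx₀).symm
  rw [volume_closedBall_zero (norm_nonneg x), volume_closedBall_zero (norm_nonneg x₀),
    ENNReal.ofReal_eq_ofReal_iff (by positivity) (by positivity), mul_right_inj' hω,
    pow_left_inj₀ (norm_nonneg x) (norm_nonneg x₀) (NeZero.ne n)] at h_eq
  exact h_eq

theorem sliceV_schwarz_subset_of_norm_le {x' y' : Euc n} (h : ‖y'‖ ≤ ‖x'‖) :
    sliceV (n + 1) (schwarz (n + 1) S) x' ⊆ sliceV (n + 1) (schwarz (n + 1) S) y' := by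
  rw [sliceV_schwarz, sliceV_schwarz]
  exact fun _ => symmBall_anti h

theorem mem_sliceH_dagStar_of_norm_le {t : ℝ} {x' y' : Euc n}
    (h : ‖y'‖ ≤ ‖x'‖) (hx : x' ∈ sliceH (n + 1) (dagStar (n + 1) S) t) :
    y' ∈ sliceH (n + 1) (dagStar (n + 1) S) t := by
  rw [dagStar, sliceH_steiner] at hx ⊢
  exact symmInterval_mono (measure_mono (sliceV_schwarz_subset_of_norm_le h)) hx

theorem schwarz_dagStar_ae_eq [NeZero n] (hS : MeasurableSet S) :
    schwarz (n + 1) (dagStar (n + 1) S) =ᵐ[volume] dagStar (n + 1) S := by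
  have hG := measurableSet_dagStar hS
  refine ae_eq_of_forall_sliceH_ae_eq (measurableSet_schwarz hG) hG fun t => ?_
  rw [sliceH_schwarz]
  exact symmBall_volume_ae_eq (n := n) fun x y h hx => mem_sliceH_dagStar_of_norm_le h hx

theorem steiner_ae_eq_of_ae_eq (hS : MeasurableSet S)
    (hT : MeasurableSet T) (h : S =ᵐ[volume] T) :
    steiner (n + 1) S =ᵐ[volume] steiner (n + 1) T := by
  rw [ae_eq_iff_ae_sliceV_ae_eq (measurableSet_steiner hS) (measurableSet_steiner hT)]
  filter_upwards [(ae_eq_iff_ae_sliceV_ae_eq hS hT).1 h] with x' hx'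
  rw [sliceV_steiner, sliceV_steiner, measure_congr hx']
  exact EventuallyEq.rfl

end Symmetrization

open Symmetrization in
theorem dagStar_idempotent_general (d : ℕ) (hd : 2 ≤ d) (E : Set (Euc d))
    (hE : MeasurableSet E) :
    volume (symmDiff (schwarz d (dagStar d E)) (dagStar d E)) = 0 ∧
    volume (symmDiff (dagStar d (dagStar d E)) (dagStar d E)) = 0 := by
  obtain ⟨n, rfl⟩ : ∃ n, d = n + 1 := ⟨d - 1, by omega⟩
  have : NeZero n := ⟨by omega⟩
  have hG := measurableSet_dagStar hE
  have h_schwarz := schwarz_dagStar_ae_eq hE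
  refine ⟨measure_symmDiff_eq_zero_iff.2 h_schwarz, measure_symmDiff_eq_zero_iff.2 ?_⟩
  have h_steiner := steiner_ae_eq_of_ae_eq (measurableSet_schwarz hG) hG h_schwarz
  rwa [dagStar, steiner_steiner] at h_steiner

/-- Lemma 4.4: `E^{†★}` is idempotent under `†` and `†★`, up to null sets. -/
theorem dagStar_idempotent (d : ℕ) (hd : 2 ≤ d) (E : Set (Euc d))
    (hE : MeasurableSet E) (h0 : 0 < volume E) (hfin : volume E < ⊤) :
    volume (symmDiff (schwarz d (dagStar d E)) (dagStar d E)) = 0 ∧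
    volume (symmDiff (dagStar d (dagStar d E)) (dagStar d E)) = 0 :=
  dagStar_idempotent_general d hd E hE
end

section
/- Let d ≥ 2. There exists a constant C < ∞ depending only on d with the following property: let E₁, E₂, E₃ ⊆ ℝ^d be Lebesgue measurable sets of finite positive measure satisfying E_j = E_j^{†★}, and let k₁,k₂,k₃ ∈ ℤ be such that |E_{j,k_j}| > 0 for each j. Then 𝒯(E_{1,k₁}, E_{2,k₂}, E_{3,k₃}) ≤ C·θ·∏_{j=1}^3 |E_{j,k_j}|^{2/3}, where θ = (min_{m≠n} 2^{−|k_m−k_n|/3}) · (min_{μ≠ν} (|E'_{μ,k_μ}| / |E'_{ν,k_ν}|)^{1/3}), the minima taken over all pairs of distinct indices in {1,2,3}. -/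
open MeasureTheory Metric Filter
open scoped ENNReal Pointwise Topology

/-!
Since `E = (E^†)^★` is Steiner symmetric in the last variable, the layer `E_k` lies between the
cylinders `E'_k × [-2^(k-1), 2^(k-1)]` and `E'_k × [-2^k, 2^k]`. The trilinear form of products
factors, so with `I_j = [-2^{k_j}, 2^{k_j}]`
`𝒯(E_{1,k₁}, E_{2,k₂}, E_{3,k₃}) ≤ 𝒯(E'_{1,k₁}, E'_{2,k₂}, E'_{3,k₃}) · 𝒯(I₁, I₂, I₃)`,
and each factor is at most the smallest pairwise product of the measures involved. The elementary
inequality `min(ab, ac, bc)³ ≤ (a/b)(abc)²` turns these two minima into the two factors of `θ`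
times `∏ (|E'_{j,k_j}| 2^{k_j})^{2/3} ≤ ∏ |E_{j,k_j}|^{2/3}`, with `C = 4`.

The estimates are carried out for `lintegralTri`, the `ℝ≥0∞`-valued form, which needs no
integrability hypotheses; `Ttri` is its `toReal` whenever it is finite.
-/

open Set

noncomputable section

def minPairMul (a b c : ℝ) : ℝ := min (a * b) (min (a * c) (b * c))

lemma minPairMul_le {a b c : ℝ} :
    minPairMul a b c ≤ a * b ∧ minPairMul a b c ≤ a * c ∧ minPairMul a b c ≤ b * c :=
  ⟨min_le_left _ _, (min_le_right _ _).trans (min_le_left _ _),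
    (min_le_right _ _).trans (min_le_right _ _)⟩

lemma minPairMul_nonneg {a b c : ℝ} (ha : 0 ≤ a) (hb : 0 ≤ b) (hc : 0 ≤ c) :
    0 ≤ minPairMul a b c :=
  le_min (by positivity) (le_min (by positivity) (by positivity))

lemma minPairMul_mul_left (r a b c : ℝ) :
    minPairMul (r * a) (r * b) (r * c) = r ^ 2 * minPairMul a b c := by
  simp only [minPairMul, mul_min_of_nonneg _ _ (sq_nonneg r)]
  ring_nf

lemma le_div_rpow_mul_rpow {a b c M : ℝ} (ha : 0 < a) (hb : 0 < b) (hc : 0 < c) (hM : 0 ≤ M)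
    (hab : M ≤ a * b) (hac : M ≤ a * c) :
    M ≤ (a / b) ^ (1 / 3 : ℝ) * (a * b * c) ^ (2 / 3 : ℝ) := by
  have hcube : M ^ 3 ≤ a / b * (a * b * c) ^ 2 := calc
    M ^ 3 = M ^ 2 * M := by ring
    _ ≤ (a * c) ^ 2 * (a * b) := by gcongr
    _ = a / b * (a * b * c) ^ 2 := by field_simp
  calc M = (M ^ 3) ^ (1 / 3 : ℝ) := by
        rw [← Real.rpow_natCast, ← Real.rpow_mul hM]; norm_num
    _ ≤ (a / b * (a * b * c) ^ 2) ^ (1 / 3 : ℝ) := by gcongr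
    _ = (a / b) ^ (1 / 3 : ℝ) * (a * b * c) ^ (2 / 3 : ℝ) := by
        rw [Real.mul_rpow (by positivity) (by positivity), ← Real.rpow_natCast,
          ← Real.rpow_mul (by positivity)]
        norm_num

lemma minPairMul_le_min_div_rpow {b₁ b₂ b₃ : ℝ} (h₁ : 0 < b₁) (h₂ : 0 < b₂) (h₃ : 0 < b₃) :
    minPairMul b₁ b₂ b₃ ≤
      min ((b₁ / b₂) ^ ((1:ℝ)/3)) (min ((b₂ / b₁) ^ ((1:ℝ)/3))
        (min ((b₁ / b₃) ^ ((1:ℝ)/3)) (min ((b₃ / b₁) ^ ((1:ℝ)/3))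
          (min ((b₂ / b₃) ^ ((1:ℝ)/3)) ((b₃ / b₂) ^ ((1:ℝ)/3)))))) *
        (b₁ * b₂ * b₃) ^ ((2:ℝ)/3) := by
  set M := minPairMul b₁ b₂ b₃
  obtain ⟨h12, h13, h23⟩ : M ≤ b₁ * b₂ ∧ M ≤ b₁ * b₃ ∧ M ≤ b₂ * b₃ := minPairMul_le
  have key {a b c : ℝ} (ha : 0 < a) (hb : 0 < b) (hc : 0 < c) (hab : M ≤ a * b)
      (hac : M ≤ a * c) (hP : a * b * c = b₁ * b₂ * b₃) :
      M ≤ (a / b) ^ ((1:ℝ)/3) * (b₁ * b₂ * b₃) ^ ((2:ℝ)/3) :=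
    hP ▸ le_div_rpow_mul_rpow ha hb hc (minPairMul_nonneg h₁.le h₂.le h₃.le) hab hac
  simp only [min_mul_of_nonneg _ _ (by positivity : (0:ℝ) ≤ (b₁ * b₂ * b₃) ^ ((2:ℝ)/3))]
  refine le_min (key h₁ h₂ h₃ ?_ ?_ ?_) (le_min (key h₂ h₁ h₃ ?_ ?_ ?_)
    (le_min (key h₁ h₃ h₂ ?_ ?_ ?_) (le_min (key h₃ h₁ h₂ ?_ ?_ ?_)
      (le_min (key h₂ h₃ h₁ ?_ ?_ ?_) (key h₃ h₂ h₁ ?_ ?_ ?_))))) <;>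
    linarith

lemma two_rpow_neg_abs_sub_div_three {i j : ℤ} (h : i ≤ j) :
    (2:ℝ) ^ (-|(i:ℝ) - (j:ℝ)| / 3) = ((2:ℝ) ^ i / (2:ℝ) ^ j) ^ ((1:ℝ)/3) := by
  rw [abs_of_nonpos (by simpa using h), ← Real.rpow_intCast, ← Real.rpow_intCast,
    ← Real.rpow_sub two_pos, ← Real.rpow_mul zero_le_two]
  ring_nf

lemma le_two_rpow_neg_abs_sub_mul {i j l : ℤ} {M : ℝ} (hM : 0 ≤ M)
    (hij : M ≤ 2 ^ i * 2 ^ j) (hil : M ≤ 2 ^ i * 2 ^ l) (hjl : M ≤ 2 ^ j * 2 ^ l) :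
    M ≤ (2:ℝ) ^ (-|(i:ℝ) - (j:ℝ)| / 3) * ((2:ℝ) ^ i * 2 ^ j * 2 ^ l) ^ ((2:ℝ)/3) := by
  rcases le_total i j with h | h
  · rw [two_rpow_neg_abs_sub_div_three h]
    exact le_div_rpow_mul_rpow (by positivity) (by positivity) (by positivity) hM hij hil
  · rw [abs_sub_comm, two_rpow_neg_abs_sub_div_three h, mul_comm ((2:ℝ) ^ i)]
    exact le_div_rpow_mul_rpow (by positivity) (by positivity) (by positivity) hM
      (by linarith) hjl

lemma minPairMul_two_zpow_le (k₁ k₂ k₃ : ℤ) :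
    minPairMul (2 ^ k₁) (2 ^ k₂) (2 ^ k₃) ≤
      min ((2:ℝ) ^ (-(|(k₁:ℝ) - (k₂:ℝ)|) / 3))
        (min ((2:ℝ) ^ (-(|(k₁:ℝ) - (k₃:ℝ)|) / 3)) ((2:ℝ) ^ (-(|(k₂:ℝ) - (k₃:ℝ)|) / 3))) *
        ((2:ℝ) ^ k₁ * 2 ^ k₂ * 2 ^ k₃) ^ ((2:ℝ)/3) := by
  obtain ⟨h12, h13, h23⟩ := minPairMul_le (a := (2:ℝ) ^ k₁) (b := 2 ^ k₂) (c := 2 ^ k₃)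
  have h0 := minPairMul_nonneg (a := (2:ℝ) ^ k₁) (b := 2 ^ k₂) (c := 2 ^ k₃)
    (by positivity) (by positivity) (by positivity)
  simp only [min_mul_of_nonneg _ _
    (by positivity : (0:ℝ) ≤ ((2:ℝ) ^ k₁ * 2 ^ k₂ * 2 ^ k₃) ^ ((2:ℝ)/3))]
  refine le_min (le_two_rpow_neg_abs_sub_mul h0 h12 h13 h23) (le_min ?_ ?_)
  · rw [mul_right_comm]
    exact le_two_rpow_neg_abs_sub_mul h0 h13 h12 (by linarith)
  · rw [show (2:ℝ) ^ k₁ * 2 ^ k₂ * 2 ^ k₃ = 2 ^ k₂ * 2 ^ k₃ * 2 ^ k₁ by ring]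
    exact le_two_rpow_neg_abs_sub_mul h0 h23 (by linarith) (by linarith)

lemma minPairMul_two_zpow_mul_minPairMul_le {b₁ b₂ b₃ v₁ v₂ v₃ : ℝ} {k₁ k₂ k₃ : ℤ}
    (hb₁ : 0 < b₁) (hb₂ : 0 < b₂) (hb₃ : 0 < b₃)
    (hv₁ : b₁ * 2 ^ k₁ ≤ v₁) (hv₂ : b₂ * 2 ^ k₂ ≤ v₂) (hv₃ : b₃ * 2 ^ k₃ ≤ v₃) :
    minPairMul (2 ^ k₁) (2 ^ k₂) (2 ^ k₃) * minPairMul b₁ b₂ b₃ ≤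
      min ((2:ℝ) ^ (-(|(k₁:ℝ) - (k₂:ℝ)|) / 3))
        (min ((2:ℝ) ^ (-(|(k₁:ℝ) - (k₃:ℝ)|) / 3)) ((2:ℝ) ^ (-(|(k₂:ℝ) - (k₃:ℝ)|) / 3))) *
      min ((b₁ / b₂) ^ ((1:ℝ)/3)) (min ((b₂ / b₁) ^ ((1:ℝ)/3))
        (min ((b₁ / b₃) ^ ((1:ℝ)/3)) (min ((b₃ / b₁) ^ ((1:ℝ)/3))
          (min ((b₂ / b₃) ^ ((1:ℝ)/3)) ((b₃ / b₂) ^ ((1:ℝ)/3)))))) *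
      (v₁ ^ ((2:ℝ)/3) * v₂ ^ ((2:ℝ)/3) * v₃ ^ ((2:ℝ)/3)) := by
  set θk := min ((2:ℝ) ^ (-(|(k₁:ℝ) - (k₂:ℝ)|) / 3))
    (min ((2:ℝ) ^ (-(|(k₁:ℝ) - (k₃:ℝ)|) / 3)) ((2:ℝ) ^ (-(|(k₂:ℝ) - (k₃:ℝ)|) / 3)))
  set θb := min ((b₁ / b₂) ^ ((1:ℝ)/3)) (min ((b₂ / b₁) ^ ((1:ℝ)/3))
    (min ((b₁ / b₃) ^ ((1:ℝ)/3)) (min ((b₃ / b₁) ^ ((1:ℝ)/3))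
      (min ((b₂ / b₃) ^ ((1:ℝ)/3)) ((b₃ / b₂) ^ ((1:ℝ)/3))))))
  set P := (2:ℝ) ^ k₁ * 2 ^ k₂ * 2 ^ k₃
  set Q := b₁ * b₂ * b₃
  have hPQ : P ^ ((2:ℝ)/3) * Q ^ ((2:ℝ)/3) ≤ v₁ ^ ((2:ℝ)/3) * v₂ ^ ((2:ℝ)/3) * v₃ ^ ((2:ℝ)/3) := by
    have hv₁' : 0 ≤ v₁ := (by positivity : 0 ≤ b₁ * 2 ^ k₁).trans hv₁
    have hv₂' : 0 ≤ v₂ := (by positivity : 0 ≤ b₂ * 2 ^ k₂).trans hv₂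
    have hv₃' : 0 ≤ v₃ := (by positivity : 0 ≤ b₃ * 2 ^ k₃).trans hv₃
    rw [← Real.mul_rpow (by positivity) (by positivity), ← Real.mul_rpow hv₁' hv₂',
      ← Real.mul_rpow (by positivity) hv₃']
    refine Real.rpow_le_rpow (by positivity) ?_ (by norm_num)
    calc P * Q = (b₁ * 2 ^ k₁) * (b₂ * 2 ^ k₂) * (b₃ * 2 ^ k₃) := by ring
      _ ≤ v₁ * v₂ * v₃ := by gcongr
  calc _ ≤ θk * P ^ ((2:ℝ)/3) * (θb * Q ^ ((2:ℝ)/3)) :=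
        mul_le_mul (minPairMul_two_zpow_le k₁ k₂ k₃) (minPairMul_le_min_div_rpow hb₁ hb₂ hb₃)
          (minPairMul_nonneg hb₁.le hb₂.le hb₃.le) (by positivity)
    _ = θk * θb * (P ^ ((2:ℝ)/3) * Q ^ ((2:ℝ)/3)) := by ring
    _ ≤ _ := by gcongr

lemma indicator_one_apply_le_one {α : Type*} (s : Set α) (z : α) :
    s.indicator (1 : α → ℝ≥0∞) z ≤ 1 :=
  indicator_le_self' (fun _ _ => zero_le) z

section Trilinear

variable {α : Type*} [AddCommGroup α]

def triIntegrand (A B C : Set α) (x y : α) : ℝ≥0∞ :=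
  A.indicator 1 x * B.indicator 1 y * C.indicator 1 (-x - y)

lemma triIntegrand_prod {β : Type*} [AddCommGroup β] (A B C : Set α) (A' B' C' : Set β)
    (p q : α × β) :
    triIntegrand (A ×ˢ A') (B ×ˢ B') (C ×ˢ C') p q =
      triIntegrand A B C p.1 q.1 * triIntegrand A' B' C' p.2 q.2 := by
  obtain ⟨x, x'⟩ := p
  obtain ⟨y, y'⟩ := q
  simp only [triIntegrand, Prod.neg_mk, Prod.mk_sub_mk, indicator_prod_one]
  ring

variable [MeasurableSpace α]

def lintegralTri (μ : Measure α) (A B C : Set α) : ℝ≥0∞ :=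
  ∫⁻ x, ∫⁻ y, triIntegrand A B C x y ∂μ ∂μ

variable {μ : Measure α}

lemma lintegralTri_mono {A B C A' B' C' : Set α}
    (hA : A ⊆ A') (hB : B ⊆ B') (hC : C ⊆ C') :
    lintegralTri μ A B C ≤ lintegralTri μ A' B' C' := by
  have hind {s t : Set α} (h : s ⊆ t) (z : α) : s.indicator (1 : α → ℝ≥0∞) z ≤ t.indicator 1 z :=
    indicator_le_indicator_of_subset h (fun _ => zero_le) z
  exact lintegral_mono fun x => lintegral_mono fun y =>
    mul_le_mul' (mul_le_mul' (hind hA x) (hind hB y)) (hind hC _)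

lemma lintegralTri_le_mul₁₂ {A B C : Set α} (hA : MeasurableSet A) (hB : MeasurableSet B) :
    lintegralTri μ A B C ≤ μ A * μ B := by
  calc lintegralTri μ A B C ≤ ∫⁻ x, ∫⁻ y, A.indicator 1 x * B.indicator 1 y ∂μ ∂μ :=
        lintegral_mono fun x => lintegral_mono fun y =>
          mul_le_of_le_one_right' (indicator_one_apply_le_one _ _)
    _ = μ A * μ B := by
        rw [lintegral_lintegral_mul (measurable_one.indicator hA).aemeasurable
          (measurable_one.indicator hB).aemeasurable, lintegral_indicator_one hA,
          lintegral_indicator_one hB]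

lemma lintegralTri_ne_top {A B C : Set α} (hA : MeasurableSet A)
    (hB : MeasurableSet B) (hA' : μ A ≠ ⊤) (hB' : μ B ≠ ⊤) : lintegralTri μ A B C ≠ ⊤ :=
  ne_top_of_le_ne_top (ENNReal.mul_ne_top hA' hB') (lintegralTri_le_mul₁₂ hA hB)

variable [MeasurableAdd₂ α] [MeasurableNeg α]

lemma measurable_triIntegrand {A B C : Set α} (hA : MeasurableSet A) (hB : MeasurableSet B)
    (hC : MeasurableSet C) : Measurable (Function.uncurry (triIntegrand A B C)) :=
  (((measurable_one.indicator hA).comp measurable_fst).mul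
    ((measurable_one.indicator hB).comp measurable_snd)).mul
    ((measurable_one.indicator hC).comp (measurable_fst.neg.sub measurable_snd))

lemma lintegralTri_le_mul₁₃ [μ.IsAddLeftInvariant] [μ.IsNegInvariant] {A B C : Set α}
    (hA : MeasurableSet A) (hC : MeasurableSet C) :
    lintegralTri μ A B C ≤ μ A * μ C := by
  calc lintegralTri μ A B C ≤ ∫⁻ x, ∫⁻ y, A.indicator 1 x * C.indicator 1 (-x - y) ∂μ ∂μ :=
        lintegral_mono fun x => lintegral_mono fun y =>
          mul_le_mul_left (mul_le_of_le_one_right' (indicator_one_apply_le_one _ _)) _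
    _ = ∫⁻ x, A.indicator 1 x * μ C ∂μ := by
        refine lintegral_congr fun x => ?_
        have hm : Measurable fun y => C.indicator (1 : α → ℝ≥0∞) (-x - y) :=
          (measurable_one.indicator hC).comp (measurable_const.sub measurable_id)
        rw [lintegral_const_mul _ hm, lintegral_sub_left_eq_self (C.indicator 1),
          lintegral_indicator_one hC]
    _ = μ A * μ C := by
        rw [lintegral_mul_const _ (measurable_one.indicator hA), lintegral_indicator_one hA]

lemma lintegralTri_comm [SFinite μ] {A B C : Set α} (hA : MeasurableSet A) (hB : MeasurableSet B)
    (hC : MeasurableSet C) : lintegralTri μ A B C = lintegralTri μ B A C := by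
  rw [lintegralTri, lintegral_lintegral_swap (measurable_triIntegrand hA hB hC).aemeasurable]
  refine lintegral_congr fun y => lintegral_congr fun x => ?_
  rw [triIntegrand, triIntegrand, mul_comm (A.indicator 1 x), neg_sub_left, neg_sub_left, add_comm]

lemma lintegralTri_le_mul₂₃ [SFinite μ] [μ.IsAddLeftInvariant] [μ.IsNegInvariant] {A B C : Set α}
    (hA : MeasurableSet A) (hB : MeasurableSet B) (hC : MeasurableSet C) :
    lintegralTri μ A B C ≤ μ B * μ C :=
  (lintegralTri_comm hA hB hC).trans_le (lintegralTri_le_mul₁₃ hB hC)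

lemma toReal_lintegralTri_le [SFinite μ] [μ.IsAddLeftInvariant] [μ.IsNegInvariant]
    {A B C : Set α} (hA : MeasurableSet A) (hB : MeasurableSet B) (hC : MeasurableSet C)
    (hA' : μ A ≠ ⊤) (hB' : μ B ≠ ⊤) (hC' : μ C ≠ ⊤) :
    (lintegralTri μ A B C).toReal ≤ minPairMul (μ A).toReal (μ B).toReal (μ C).toReal := by
  have key {s t : Set α} (hs : μ s ≠ ⊤) (ht : μ t ≠ ⊤) (h : lintegralTri μ A B C ≤ μ s * μ t) :
      (lintegralTri μ A B C).toReal ≤ (μ s).toReal * (μ t).toReal :=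
    ENNReal.toReal_mul ▸ ENNReal.toReal_mono (ENNReal.mul_ne_top hs ht) h
  exact le_min (key hA' hB' (lintegralTri_le_mul₁₂ hA hB)) (le_min
    (key hA' hC' (lintegralTri_le_mul₁₃ hA hC)) (key hB' hC' (lintegralTri_le_mul₂₃ hA hB hC)))

end Trilinear

section Transfer

variable {α β : Type*} [MeasurableSpace α] [AddCommGroup α] [MeasurableSpace β] [AddCommGroup β]

lemma lintegralTri_prod [MeasurableAdd₂ α] [MeasurableNeg α] [MeasurableAdd₂ β] [MeasurableNeg β]
    {μ : Measure α} {ν : Measure β} [SFinite μ] [SFinite ν] {A B C : Set α} {A' B' C' : Set β}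
    (hA : MeasurableSet A) (hB : MeasurableSet B) (hC : MeasurableSet C)
    (hA' : MeasurableSet A') (hB' : MeasurableSet B') (hC' : MeasurableSet C') :
    lintegralTri (μ.prod ν) (A ×ˢ A') (B ×ˢ B') (C ×ˢ C') =
      lintegralTri μ A B C * lintegralTri ν A' B' C' := by
  have hf := measurable_triIntegrand hA hB hC
  have hg := measurable_triIntegrand hA' hB' hC'
  have inner (p : α × β) :
      ∫⁻ q, triIntegrand (A ×ˢ A') (B ×ˢ B') (C ×ˢ C') p q ∂μ.prod ν =
        (∫⁻ y, triIntegrand A B C p.1 y ∂μ) * ∫⁻ y', triIntegrand A' B' C' p.2 y' ∂ν := by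
    simp only [triIntegrand_prod]
    exact lintegral_prod_mul hf.of_uncurry_left.aemeasurable hg.of_uncurry_left.aemeasurable
  simp only [lintegralTri, inner]
  exact lintegral_prod_mul hf.lintegral_prod_right'.aemeasurable
    hg.lintegral_prod_right'.aemeasurable

lemma lintegralTri_preimage {μ : Measure α} {ν : Measure β} (f : α →+ β)
    (hf : MeasurePreserving f μ ν) (hfe : MeasurableEmbedding f) (A B C : Set β) :
    lintegralTri μ (f ⁻¹' A) (f ⁻¹' B) (f ⁻¹' C) = lintegralTri ν A B C := by
  have hcomp (x y : α) :
      triIntegrand (f ⁻¹' A) (f ⁻¹' B) (f ⁻¹' C) x y = triIntegrand A B C (f x) (f y) := by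
    rw [triIntegrand, triIntegrand, ← map_neg, ← map_sub]
    rfl
  simp only [lintegralTri, hcomp, hf.lintegral_comp_emb hfe]
  exact hf.lintegral_comp_emb hfe fun x => ∫⁻ y, triIntegrand A B C x y ∂ν

end Transfer

lemma Ttri_eq_toReal_lintegralTri {d : ℕ} {A B C : Set (Euc d)} (hA : MeasurableSet A)
    (hB : MeasurableSet B) (hC : MeasurableSet C) (h : lintegralTri volume A B C ≠ ⊤) :
    Ttri A B C = (lintegralTri volume A B C).toReal := by
  have hf := measurable_triIntegrand hA hB hC
  have hreal (x y : Euc d) : A.indicator (fun _ => (1:ℝ)) x * B.indicator (fun _ => (1:ℝ)) y *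
      C.indicator (fun _ => (1:ℝ)) (-x - y) = (triIntegrand A B C x y).toReal := by
    by_cases hx : x ∈ A <;> by_cases hy : y ∈ B <;> by_cases hxy : -x - y ∈ C <;>
      simp [triIntegrand, hx, hy, hxy]
  have hinner (x : Euc d) : ∫ y, (triIntegrand A B C x y).toReal =
      (∫⁻ y, triIntegrand A B C x y).toReal :=
    integral_toReal hf.of_uncurry_left.aemeasurable
      (ae_of_all _ fun y => (mul_le_one' (mul_le_one' (indicator_one_apply_le_one _ _)
        (indicator_one_apply_le_one _ _)) (indicator_one_apply_le_one _ _)).trans_lt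
          ENNReal.one_lt_top)
  simp only [Ttri, hreal, hinner]
  exact integral_toReal hf.lintegral_prod_right'.aemeasurable
    (ae_lt_top hf.lintegral_prod_right' h)

section Cylinder

variable (n : ℕ)

def joinEquiv : (Euc n × ℝ) ≃ᵐ Euc (n+1) :=
  ((MeasurableEquiv.prodCongr (MeasurableEquiv.toLp 2 (Fin n → ℝ)).symm
      (MeasurableEquiv.refl ℝ)).trans MeasurableEquiv.prodComm).trans
    ((MeasurableEquiv.piFinSuccAbove (fun _ : Fin (n+1) => ℝ) (Fin.last n)).symm.trans
      (MeasurableEquiv.toLp 2 (Fin (n+1) → ℝ)))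

variable {n}

lemma joinEquiv_apply (p : Euc n × ℝ) : joinEquiv n p = _root_.join (n+1) p.1 p.2 := by
  obtain ⟨x', t⟩ := p
  have hins : joinEquiv n (x', t) = WithLp.toLp 2 (Fin.insertNth (Fin.last n) t x') := by
    simp [joinEquiv, MeasurableEquiv.piFinSuccAbove_symm_apply]
    rfl
  ext i
  rw [hins, WithLp.ofLp_toLp]
  induction i using Fin.lastCases with
  | last => simp [_root_.join]
  | cast j =>
    rw [← Fin.succAbove_last, Fin.insertNth_apply_succAbove]
    simp [_root_.join]

lemma measurePreserving_joinEquiv : MeasurePreserving (joinEquiv n) volume volume := by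
  have h₁ : MeasurePreserving (MeasurableEquiv.prodCongr (MeasurableEquiv.toLp 2 (Fin n → ℝ)).symm
      (MeasurableEquiv.refl ℝ)) (volume.prod volume) (volume.prod volume) :=
    (EuclideanSpace.volume_preserving_symm_measurableEquiv_toLp (Fin n)).prod
      (MeasurePreserving.id volume)
  have h₃ := (volume_preserving_piFinSuccAbove (fun _ : Fin (n+1) => ℝ) (Fin.last n)).symm
  have h₄ := (EuclideanSpace.volume_preserving_symm_measurableEquiv_toLp (Fin (n+1))).symm
  rw [Measure.volume_eq_prod] at h₃ ⊢
  exact h₄.comp (h₃.comp (Measure.measurePreserving_swap.comp h₁))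

lemma projHead_join (x' : Euc n) (t : ℝ) : projHead (n+1) (_root_.join (n+1) x' t) = x' := by
  ext i
  simp [projHead, _root_.join]

lemma lastC_join (x' : Euc n) (t : ℝ) : lastC (n+1) (_root_.join (n+1) x' t) = t := by
  simp [lastC, _root_.join]

lemma join_projHead_lastC (x : Euc (n+1)) :
    _root_.join (n+1) (projHead (n+1) x) (lastC (n+1) x) = x := by
  ext i
  induction i using Fin.lastCases with
  | last => simp [_root_.join, lastC]; rfl
  | cast j => simp [_root_.join, projHead]

lemma joinEquiv_symm_apply (x : Euc (n+1)) :
    (joinEquiv n).symm x = (projHead (n+1) x, lastC (n+1) x) := by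
  rw [MeasurableEquiv.symm_apply_eq, joinEquiv_apply, join_projHead_lastC]

variable (n) in
def splitLast : Euc (n+1) →+ Euc n × ℝ :=
  AddMonoidHom.mk' (joinEquiv n).symm fun x y => by
    rw [joinEquiv_symm_apply, joinEquiv_symm_apply, joinEquiv_symm_apply]
    exact Prod.ext (by ext i; simp [projHead]) (by simp [lastC])

lemma splitLast_apply (x : Euc (n+1)) : splitLast n x = (projHead (n+1) x, lastC (n+1) x) :=
  joinEquiv_symm_apply x

lemma measurePreserving_splitLast : MeasurePreserving (splitLast n) volume volume :=
  measurePreserving_joinEquiv.symm (joinEquiv n)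

lemma measurableEmbedding_splitLast : MeasurableEmbedding (splitLast n) :=
  (joinEquiv n).symm.measurableEmbedding

lemma volume_preimage_splitLast_prod {B : Set (Euc n)} {I : Set ℝ} (hB : MeasurableSet B)
    (hI : MeasurableSet I) : volume (splitLast n ⁻¹' (B ×ˢ I)) = volume B * volume I := by
  rw [measurePreserving_splitLast.measure_preimage (hB.prod hI).nullMeasurableSet,
    Measure.volume_eq_prod, Measure.prod_prod]

lemma lintegralTri_preimage_splitLast_prod {B₁ B₂ B₃ : Set (Euc n)} {I₁ I₂ I₃ : Set ℝ}
    (hB₁ : MeasurableSet B₁) (hB₂ : MeasurableSet B₂) (hB₃ : MeasurableSet B₃)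
    (hI₁ : MeasurableSet I₁) (hI₂ : MeasurableSet I₂) (hI₃ : MeasurableSet I₃) :
    lintegralTri volume (splitLast n ⁻¹' (B₁ ×ˢ I₁)) (splitLast n ⁻¹' (B₂ ×ˢ I₂))
      (splitLast n ⁻¹' (B₃ ×ˢ I₃)) =
        lintegralTri volume B₁ B₂ B₃ * lintegralTri volume I₁ I₂ I₃ := by
  rw [lintegralTri_preimage (splitLast n) measurePreserving_splitLast measurableEmbedding_splitLast,
    Measure.volume_eq_prod, lintegralTri_prod hB₁ hB₂ hB₃ hI₁ hI₂ hI₃]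

lemma measurable_volume_sliceV {E : Set (Euc (n+1))} (hE : MeasurableSet E) :
    Measurable fun x' => volume (sliceV (n+1) E x') := by
  have hslice (x' : Euc n) : sliceV (n+1) E x' = Prod.mk x' ⁻¹' (joinEquiv n ⁻¹' E) := by
    ext t
    simp [sliceV, joinEquiv_apply]
  simp only [hslice]
  exact measurable_measure_prodMk_left ((joinEquiv n).measurable hE)

end Cylinder

section Steiner

variable {n : ℕ}

lemma join_mem_steiner_iff (F : Set (Euc (n+1))) (x' : Euc n) (t : ℝ) :
    _root_.join (n+1) x' t ∈ steiner (n+1) F ↔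
      0 < volume (sliceV (n+1) F x') ∧ ENNReal.ofReal (2 * |t|) ≤ volume (sliceV (n+1) F x') := by
  refine ⟨fun ⟨y', s, h, hpos, hle⟩ => ?_, fun h => ⟨x', t, rfl, h⟩⟩
  obtain ⟨rfl, rfl⟩ : x' = y' ∧ t = s :=
    ⟨by simpa only [projHead_join] using congrArg (projHead (n+1)) h,
      by simpa only [lastC_join] using congrArg (lastC (n+1)) h⟩
  exact ⟨hpos, hle⟩

lemma volume_sliceV_steiner (F : Set (Euc (n+1))) (x' : Euc n) :
    volume (sliceV (n+1) (steiner (n+1) F) x') = volume (sliceV (n+1) F x') := by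
  set h := volume (sliceV (n+1) F x')
  have hslice : sliceV (n+1) (steiner (n+1) F) x' = {t | 0 < h ∧ ENNReal.ofReal (2 * |t|) ≤ h} :=
    ext fun t => join_mem_steiner_iff F x' t
  rw [hslice]
  rcases eq_zero_or_pos h with h0 | hpos
  · simp [h0]
  rcases eq_or_ne h ⊤ with htop | htop
  · simp [htop]
  have hIcc :
      {t | 0 < h ∧ ENNReal.ofReal (2 * |t|) ≤ h} = Icc (-(h.toReal / 2)) (h.toReal / 2) := by
    ext t
    simp only [mem_ofPred_eq, hpos, true_and, ENNReal.ofReal_le_iff_le_toReal htop, mem_Icc,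
      ← abs_le]
    constructor <;> intro <;> linarith
  rw [hIcc, Real.volume_Icc, sub_neg_eq_add, add_halves, ENNReal.ofReal_toReal htop]

end Steiner

section Layer

variable {n : ℕ} {E F : Set (Euc (n+1))}

lemma join_mem_iff_of_eq_steiner (hE : E = steiner (n+1) F) (x' : Euc n) (t : ℝ) :
    _root_.join (n+1) x' t ∈ E ↔
      0 < volume (sliceV (n+1) E x') ∧ ENNReal.ofReal (2 * |t|) ≤ volume (sliceV (n+1) E x') := by
  have hvol : volume (sliceV (n+1) E x') = volume (sliceV (n+1) F x') := by
    rw [hE, volume_sliceV_steiner]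
  rw [hvol]
  conv_lhs => rw [hE]
  exact join_mem_steiner_iff F x' t

lemma measurableSet_layerBase (hE : MeasurableSet E) (k : ℤ) :
    MeasurableSet (layerBase (n+1) E k) :=
  (measurableSet_le measurable_const (measurable_volume_sliceV hE)).inter
    (measurableSet_lt (measurable_volume_sliceV hE) measurable_const)

lemma measurableSet_layer (hE : MeasurableSet E) (k : ℤ) : MeasurableSet (layer (n+1) E k) := by
  have hproj : Measurable (projHead (n+1)) := by
    have : projHead (n+1) = Prod.fst ∘ splitLast n := funext fun x => by simp [splitLast_apply]
    exact this ▸ measurable_fst.comp measurableEmbedding_splitLast.measurable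
  exact hE.inter (hproj (measurableSet_layerBase hE k))

lemma layer_subset_preimage_prod (hE : E = steiner (n+1) F) (k : ℤ) :
    layer (n+1) E k ⊆ splitLast n ⁻¹' (layerBase (n+1) E k ×ˢ Icc (-2 ^ k) (2 ^ k)) := by
  intro x ⟨hxE, hB⟩
  rw [← join_projHead_lastC x, join_mem_iff_of_eq_steiner hE] at hxE
  refine ⟨by simpa [splitLast_apply] using hB, ?_⟩
  have hlt := (ENNReal.ofReal_lt_ofReal_iff (by positivity)).1 (hxE.2.trans_lt hB.2)
  rw [zpow_add_one₀ two_ne_zero] at hlt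
  simpa [splitLast_apply, ← abs_le] using (by linarith : |lastC (n+1) x| ≤ 2 ^ k)

lemma preimage_prod_subset_layer (hE : E = steiner (n+1) F) (k : ℤ) :
    splitLast n ⁻¹' (layerBase (n+1) E k ×ˢ Icc (-(2 ^ k / 2)) (2 ^ k / 2)) ⊆ layer (n+1) E k := by
  intro x hx
  simp only [mem_preimage, splitLast_apply, mem_prod, mem_Icc, ← abs_le] at hx
  obtain ⟨hB, ht⟩ := hx
  refine ⟨?_, hB⟩
  rw [← join_projHead_lastC x, join_mem_iff_of_eq_steiner hE]
  refine ⟨(ENNReal.ofReal_pos.2 (by positivity)).trans_le hB.1,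
    (ENNReal.ofReal_le_ofReal ?_).trans hB.1⟩
  linarith

lemma volume_layer_le (hE : E = steiner (n+1) F) (hEm : MeasurableSet E) (k : ℤ) :
    volume (layer (n+1) E k) ≤ volume (layerBase (n+1) E k) * ENNReal.ofReal (2 * 2 ^ k) := by
  refine (measure_mono (layer_subset_preimage_prod hE k)).trans_eq ?_
  rw [volume_preimage_splitLast_prod (n := n) (measurableSet_layerBase hEm k) measurableSet_Icc,
    Real.volume_Icc, sub_neg_eq_add, two_mul]

lemma volume_layerBase_mul_le (hE : E = steiner (n+1) F) (hEm : MeasurableSet E) (k : ℤ) :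
    volume (layerBase (n+1) E k) * ENNReal.ofReal (2 ^ k) ≤ volume (layer (n+1) E k) := by
  refine le_of_eq_of_le ?_ (measure_mono (preimage_prod_subset_layer hE k))
  rw [volume_preimage_splitLast_prod (n := n) (measurableSet_layerBase hEm k) measurableSet_Icc,
    Real.volume_Icc, sub_neg_eq_add, add_halves]

lemma volume_layerBase_ne_top (hE : E = steiner (n+1) F) (hEm : MeasurableSet E)
    (hEfin : volume E < ⊤) (k : ℤ) : volume (layerBase (n+1) E k) ≠ ⊤ := by
  have hlt : volume (layerBase (n+1) E k) * ENNReal.ofReal (2 ^ k) < ⊤ :=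
    (volume_layerBase_mul_le hE hEm k).trans_lt ((measure_mono (sep_subset _ _)).trans_lt hEfin)
  exact (ENNReal.lt_top_of_mul_ne_top_left hlt.ne (ENNReal.ofReal_pos.2 (by positivity)).ne').ne

lemma toReal_volume_layerBase_pos (hE : E = steiner (n+1) F) (hEm : MeasurableSet E)
    (hEfin : volume E < ⊤) {k : ℤ} (hL : 0 < volume (layer (n+1) E k)) :
    0 < (volume (layerBase (n+1) E k)).toReal := by
  refine ENNReal.toReal_pos (fun h0 => hL.ne' ?_) (volume_layerBase_ne_top hE hEm hEfin k)
  simpa [h0] using volume_layer_le hE hEm k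

lemma toReal_volume_layerBase_mul_le (hE : E = steiner (n+1) F) (hEm : MeasurableSet E)
    (hEfin : volume E < ⊤) (k : ℤ) :
    (volume (layerBase (n+1) E k)).toReal * 2 ^ k ≤ (volume (layer (n+1) E k)).toReal := by
  have h := ENNReal.toReal_mono ((measure_mono (sep_subset _ _)).trans_lt hEfin).ne
    (volume_layerBase_mul_le hE hEm k)
  rwa [ENNReal.toReal_mul, ENNReal.toReal_ofReal (by positivity)] at h

end Layer

theorem Ttri_layer_le {n : ℕ} {E₁ E₂ E₃ F₁ F₂ F₃ : Set (Euc (n+1))}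
    (hE₁ : E₁ = steiner (n+1) F₁) (hE₂ : E₂ = steiner (n+1) F₂) (hE₃ : E₃ = steiner (n+1) F₃)
    (hm₁ : MeasurableSet E₁) (hm₂ : MeasurableSet E₂) (hm₃ : MeasurableSet E₃)
    (hf₁ : volume E₁ < ⊤) (hf₂ : volume E₂ < ⊤) (hf₃ : volume E₃ < ⊤) (k₁ k₂ k₃ : ℤ) :
    Ttri (layer (n+1) E₁ k₁) (layer (n+1) E₂ k₂) (layer (n+1) E₃ k₃) ≤
      4 * (minPairMul (2 ^ k₁) (2 ^ k₂) (2 ^ k₃) *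
        minPairMul (volume (layerBase (n+1) E₁ k₁)).toReal (volume (layerBase (n+1) E₂ k₂)).toReal
          (volume (layerBase (n+1) E₃ k₃)).toReal) := by
  set I : ℤ → Set ℝ := fun k => Icc (-2 ^ k) (2 ^ k)
  have hIreal (k : ℤ) : (volume (I k)).toReal = 2 * 2 ^ k := by
    rw [Real.volume_Icc, sub_neg_eq_add, ← two_mul, ENNReal.toReal_ofReal (by positivity)]
  have hIfin (k : ℤ) : volume (I k) ≠ ⊤ := measure_Icc_lt_top.ne
  have hB₁ := measurableSet_layerBase hm₁ k₁
  have hB₂ := measurableSet_layerBase hm₂ k₂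
  have hB₃ := measurableSet_layerBase hm₃ k₃
  have hBfin₁ := volume_layerBase_ne_top hE₁ hm₁ hf₁ k₁
  have hBfin₂ := volume_layerBase_ne_top hE₂ hm₂ hf₂ k₂
  have hBfin₃ := volume_layerBase_ne_top hE₃ hm₃ hf₃ k₃
  have hcyl : lintegralTri volume (layer (n+1) E₁ k₁) (layer (n+1) E₂ k₂) (layer (n+1) E₃ k₃) ≤
      lintegralTri volume (layerBase (n+1) E₁ k₁) (layerBase (n+1) E₂ k₂) (layerBase (n+1) E₃ k₃) *
        lintegralTri volume (I k₁) (I k₂) (I k₃) :=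
    (lintegralTri_mono (layer_subset_preimage_prod hE₁ k₁) (layer_subset_preimage_prod hE₂ k₂)
      (layer_subset_preimage_prod hE₃ k₃)).trans_eq
      (lintegralTri_preimage_splitLast_prod hB₁ hB₂ hB₃ measurableSet_Icc measurableSet_Icc
        measurableSet_Icc)
  have hfin : lintegralTri volume (layerBase (n+1) E₁ k₁) (layerBase (n+1) E₂ k₂)
      (layerBase (n+1) E₃ k₃) * lintegralTri volume (I k₁) (I k₂) (I k₃) ≠ ⊤ :=
    ENNReal.mul_ne_top (lintegralTri_ne_top hB₁ hB₂ hBfin₁ hBfin₂)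
      (lintegralTri_ne_top measurableSet_Icc measurableSet_Icc (hIfin k₁) (hIfin k₂))
  rw [Ttri_eq_toReal_lintegralTri (measurableSet_layer hm₁ k₁) (measurableSet_layer hm₂ k₂)
    (measurableSet_layer hm₃ k₃) (ne_top_of_le_ne_top hfin hcyl)]
  calc _ ≤ (lintegralTri volume (I k₁) (I k₂) (I k₃)).toReal *
        (lintegralTri volume (layerBase (n+1) E₁ k₁) (layerBase (n+1) E₂ k₂)
          (layerBase (n+1) E₃ k₃)).toReal := by
        rw [mul_comm, ← ENNReal.toReal_mul]
        exact ENNReal.toReal_mono hfin hcyl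
    _ ≤ minPairMul (2 * 2 ^ k₁) (2 * 2 ^ k₂) (2 * 2 ^ k₃) *
        minPairMul (volume (layerBase (n+1) E₁ k₁)).toReal (volume (layerBase (n+1) E₂ k₂)).toReal
          (volume (layerBase (n+1) E₃ k₃)).toReal := by
        refine mul_le_mul ?_ (toReal_lintegralTri_le hB₁ hB₂ hB₃ hBfin₁ hBfin₂ hBfin₃)
          ENNReal.toReal_nonneg (minPairMul_nonneg (by positivity) (by positivity) (by positivity))
        rw [← hIreal k₁, ← hIreal k₂, ← hIreal k₃]
        exact toReal_lintegralTri_le measurableSet_Icc measurableSet_Icc measurableSet_Icc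
          (hIfin k₁) (hIfin k₂) (hIfin k₃)
    _ = _ := by
        rw [minPairMul_mul_left]
        ring

end

/-- Lemma 5.2: the layered trilinear estimate. -/
theorem layer_trilinear_bound (d : ℕ) (hd : 2 ≤ d) :
    ∃ C : ℝ, 0 < C ∧
      ∀ E₁ E₂ E₃ : Set (Euc d),
        MeasurableSet E₁ → MeasurableSet E₂ → MeasurableSet E₃ →
        0 < volume E₁ → volume E₁ < ⊤ →
        0 < volume E₂ → volume E₂ < ⊤ →
        0 < volume E₃ → volume E₃ < ⊤ →
        E₁ = dagStar d E₁ → E₂ = dagStar d E₂ → E₃ = dagStar d E₃ →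
        ∀ k₁ k₂ k₃ : ℤ,
          0 < volume (layer d E₁ k₁) → 0 < volume (layer d E₂ k₂) →
          0 < volume (layer d E₃ k₃) →
          Ttri (layer d E₁ k₁) (layer d E₂ k₂) (layer d E₃ k₃) ≤
            C *
            (min ((2:ℝ) ^ (-(|(k₁:ℝ) - (k₂:ℝ)|) / 3))
              (min ((2:ℝ) ^ (-(|(k₁:ℝ) - (k₃:ℝ)|) / 3))
                ((2:ℝ) ^ (-(|(k₂:ℝ) - (k₃:ℝ)|) / 3)))) *
            (min (((volume (layerBase d E₁ k₁)).toReal /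
                    (volume (layerBase d E₂ k₂)).toReal) ^ ((1:ℝ)/3))
              (min (((volume (layerBase d E₂ k₂)).toReal /
                    (volume (layerBase d E₁ k₁)).toReal) ^ ((1:ℝ)/3))
                (min (((volume (layerBase d E₁ k₁)).toReal /
                      (volume (layerBase d E₃ k₃)).toReal) ^ ((1:ℝ)/3))
                  (min (((volume (layerBase d E₃ k₃)).toReal /
                        (volume (layerBase d E₁ k₁)).toReal) ^ ((1:ℝ)/3))
                    (min (((volume (layerBase d E₂ k₂)).toReal /
                          (volume (layerBase d E₃ k₃)).toReal) ^ ((1:ℝ)/3))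
                      (((volume (layerBase d E₃ k₃)).toReal /
                        (volume (layerBase d E₂ k₂)).toReal) ^ ((1:ℝ)/3))))))) *
            ((volume (layer d E₁ k₁)).toReal ^ ((2:ℝ)/3) *
             (volume (layer d E₂ k₂)).toReal ^ ((2:ℝ)/3) *
             (volume (layer d E₃ k₃)).toReal ^ ((2:ℝ)/3)) := by
  obtain ⟨n, rfl⟩ : ∃ n, d = n + 1 := ⟨d - 1, by omega⟩
  refine ⟨4, four_pos, fun E₁ E₂ E₃ hm₁ hm₂ hm₃ _ hf₁ _ hf₂ _ hf₃ hs₁ hs₂ hs₃ k₁ k₂ k₃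
    hl₁ hl₂ hl₃ => ?_⟩
  have hθ := minPairMul_two_zpow_mul_minPairMul_le
    (toReal_volume_layerBase_pos hs₁ hm₁ hf₁ hl₁) (toReal_volume_layerBase_pos hs₂ hm₂ hf₂ hl₂)
    (toReal_volume_layerBase_pos hs₃ hm₃ hf₃ hl₃) (toReal_volume_layerBase_mul_le hs₁ hm₁ hf₁ k₁)
    (toReal_volume_layerBase_mul_le hs₂ hm₂ hf₂ k₂) (toReal_volume_layerBase_mul_le hs₃ hm₃ hf₃ k₃)
  calc _ ≤ _ := Ttri_layer_le hs₁ hs₂ hs₃ hm₁ hm₂ hm₃ hf₁ hf₂ hf₃ k₁ k₂ k₃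
    _ ≤ 4 * _ := mul_le_mul_of_nonneg_left hθ zero_le_four
    _ = _ := by ring
end
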